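/- Let M be a real symmetric p×p matrix of rank r whose smallest nonzero singular value equals σ, and let Δ be a real symmetric p×p matrix with ‖Δ‖₂ ≤ σ/8 such that M+Δ also has rank r. Then ρ(T(M+Δ), T(M)) ≤ (2/σ)·‖Δ‖₂. -/

import Mathlib

open Matrix MeasureTheory
open scoped Classical

noncomputable section

namespace LVGGM

variable {p h : ℕ}

/-- Spectral norm (largest singular value) of a real square matrix. -/
def specNorm (M : Matrix (Fin p) (Fin p) ℝ) : ℝ :=
  ‖Matrix.toEuclideanCLM (𝕜 := ℝ) M‖

/-- Entrywise max norm `‖M‖_∞`. -/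
def maxNorm (M : Matrix (Fin p) (Fin p) ℝ) : ℝ :=
  ⨆ i, ⨆ j, |M i j|

/-- Entrywise ℓ₁ norm `‖M‖₁`. -/
def l1Norm (M : Matrix (Fin p) (Fin p) ℝ) : ℝ :=
  ∑ i, ∑ j, |M i j|

/-- The matrix of the orthogonal projection of ℝ^p onto the column space of `M`. -/
def colProj (M : Matrix (Fin p) (Fin p) ℝ) : Matrix (Fin p) (Fin p) ℝ :=
  LinearMap.toMatrix (EuclideanSpace.basisFun (Fin p) ℝ).toBasis
    (EuclideanSpace.basisFun (Fin p) ℝ).toBasis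
    ((LinearMap.range (Matrix.toEuclideanLin M)).subtype ∘ₗ
      (LinearMap.range (Matrix.toEuclideanLin M)).orthogonalProjectionOnto.toLinearMap)

/-- Singular values of a matrix, as square roots of eigenvalues of `Mᴴ M`. -/
def singVals (M : Matrix (Fin p) (Fin p) ℝ) (i : Fin p) : ℝ :=
  Real.sqrt ((Matrix.posSemidef_conjTranspose_mul_self M).1.eigenvalues i)

/-! ### Sparse tangent spaces -/

/-- Tangent space to the variety of sparse matrices at `M₀`. -/
def OmegaSet (M₀ : Matrix (Fin p) (Fin p) ℝ) : Set (Matrix (Fin p) (Fin p) ℝ) :=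
  {N | ∀ i j, M₀ i j = 0 → N i j = 0}

/-- Orthogonal projection onto `OmegaSet M₀`. -/
def projOmega (M₀ N : Matrix (Fin p) (Fin p) ℝ) : Matrix (Fin p) (Fin p) ℝ :=
  Matrix.of fun i j => if M₀ i j = 0 then 0 else N i j

/-- Orthogonal projection onto the orthogonal complement of `OmegaSet M₀`. -/
def projOmegaPerp (M₀ N : Matrix (Fin p) (Fin p) ℝ) : Matrix (Fin p) (Fin p) ℝ :=
  Matrix.of fun i j => if M₀ i j = 0 then N i j else 0

/-- `μ(Ω(M₀))`: max spectral norm over the `‖·‖_∞`-unit ball of `Ω(M₀)`. -/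
def muOmega (M₀ : Matrix (Fin p) (Fin p) ℝ) : ℝ :=
  ⨆ N : {N : Matrix (Fin p) (Fin p) ℝ // N ∈ OmegaSet M₀ ∧ maxNorm N ≤ 1}, specNorm N.1

/-! ### Low-rank tangent spaces (symmetric version) -/

/-- `𝒫_{T(M)}` for symmetric `M`: `N ↦ P N + N P − P N P` with `P` the column-space projector. -/
def projTsym (M N : Matrix (Fin p) (Fin p) ℝ) : Matrix (Fin p) (Fin p) ℝ :=
  colProj M * N + N * colProj M - colProj M * N * colProj M

/-- `𝒫_{T(M)^⊥}` for symmetric `M`: `N ↦ (I−P) N (I−P)`. -/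
def projTsymPerp (M N : Matrix (Fin p) (Fin p) ℝ) : Matrix (Fin p) (Fin p) ℝ :=
  (1 - colProj M) * N * (1 - colProj M)

/-- Tangent space to the variety of symmetric low-rank matrices at symmetric `M`. -/
def TsetSym (M : Matrix (Fin p) (Fin p) ℝ) : Set (Matrix (Fin p) (Fin p) ℝ) :=
  {N | N.IsHermitian ∧ projTsymPerp M N = 0}

/-- `ξ(T(M))` (symmetric version). -/
def xiT (M : Matrix (Fin p) (Fin p) ℝ) : ℝ :=
  ⨆ N : {N : Matrix (Fin p) (Fin p) ℝ // N ∈ TsetSym M ∧ specNorm N ≤ 1}, maxNorm N.1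

/-- `ρ(T(M₁), T(M₂))` (symmetric version). -/
def rhoSym (M₁ M₂ : Matrix (Fin p) (Fin p) ℝ) : ℝ :=
  ⨆ N : {N : Matrix (Fin p) (Fin p) ℝ // specNorm N ≤ 1},
    specNorm (projTsym M₁ N.1 - projTsym M₂ N.1)

/-! ### Low-rank tangent spaces (general version) -/

/-- `𝒫_{T(M)}` for general `M`: `N ↦ P_U N + N P_V − P_U N P_V`. -/
def projTgen (M N : Matrix (Fin p) (Fin p) ℝ) : Matrix (Fin p) (Fin p) ℝ :=
  colProj M * N + N * colProj Mᵀ - colProj M * N * colProj Mᵀ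

/-- `𝒫_{T(M)^⊥}` for general `M`. -/
def projTgenPerp (M N : Matrix (Fin p) (Fin p) ℝ) : Matrix (Fin p) (Fin p) ℝ :=
  (1 - colProj M) * N * (1 - colProj Mᵀ)

/-- Tangent space to the variety of low-rank matrices at a general matrix `M`. -/
def TsetGen (M : Matrix (Fin p) (Fin p) ℝ) : Set (Matrix (Fin p) (Fin p) ℝ) :=
  {N | projTgenPerp M N = 0}

/-- `ξ(T(M))` (general version). -/
def xiGen (M : Matrix (Fin p) (Fin p) ℝ) : ℝ :=
  ⨆ N : {N : Matrix (Fin p) (Fin p) ℝ // N ∈ TsetGen M ∧ specNorm N ≤ 1}, maxNorm N.1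

/-- Euclidean norm of the `i`-th column of `P`, i.e. `‖P e_i‖`. -/
def colEucNorm (P : Matrix (Fin p) (Fin p) ℝ) (i : Fin p) : ℝ :=
  Real.sqrt (∑ j, (P j i) ^ 2)

/-- Incoherence `inc(M)` of the row/column spaces of `M`. -/
def inc (M : Matrix (Fin p) (Fin p) ℝ) : ℝ :=
  max (⨆ i, colEucNorm (colProj M) i) (⨆ i, colEucNorm (colProj Mᵀ) i)

/-! ### Orthogonal projections onto arbitrary subspaces of matrices -/

/-- Matrices as vectors in the Euclidean space of entries (trace inner product). -/
def toELin : Matrix (Fin p) (Fin p) ℝ →ₗ[ℝ] EuclideanSpace ℝ (Fin p × Fin p) where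
  toFun M := WithLp.toLp 2 fun q => M q.1 q.2
  map_add' _ _ := rfl
  map_smul' _ _ := rfl

/-- Orthogonal projection (trace inner product) onto a subspace of matrices. -/
def matProj (T : Submodule ℝ (Matrix (Fin p) (Fin p) ℝ)) (N : Matrix (Fin p) (Fin p) ℝ) :
    Matrix (Fin p) (Fin p) ℝ :=
  Matrix.of fun i j => ((T.map toELin).orthogonalProjectionOnto (toELin N) : EuclideanSpace ℝ (Fin p × Fin p)) (i, j)

/-- `ρ(T₁,T₂)` for arbitrary subspaces of matrices. -/
def rhoSub (T₁ T₂ : Submodule ℝ (Matrix (Fin p) (Fin p) ℝ)) : ℝ :=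
  ⨆ N : {N : Matrix (Fin p) (Fin p) ℝ // specNorm N ≤ 1},
    specNorm (matProj T₁ N.1 - matProj T₂ N.1)

/-- `ξ(T)` for an arbitrary subspace of matrices. -/
def xiSub (T : Submodule ℝ (Matrix (Fin p) (Fin p) ℝ)) : ℝ :=
  ⨆ N : {N : Matrix (Fin p) (Fin p) ℝ // N ∈ T ∧ specNorm N ≤ 1}, maxNorm N.1

/-! ### The dual norm g_γ -/

/-- `g_γ(S,L) = max(‖S‖_∞/γ, ‖L‖₂)`. -/
def gNorm (γ : ℝ) (S L : Matrix (Fin p) (Fin p) ℝ) : ℝ :=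
  max (maxNorm S / γ) (specNorm L)

/-- `g_γ(𝒜†(M)) = max(‖M‖_∞/γ, ‖M‖₂)`. -/
def gA (γ : ℝ) (M : Matrix (Fin p) (Fin p) ℝ) : ℝ :=
  max (maxNorm M / γ) (specNorm M)

/-! ### Latent-variable Fisher information setup -/

/-- `S* = K*_O`. -/
def Sstar (K : Matrix (Fin p ⊕ Fin h) (Fin p ⊕ Fin h) ℝ) : Matrix (Fin p) (Fin p) ℝ :=
  K.toBlocks₁₁

/-- `L* = K*_{O,H} (K*_H)⁻¹ K*_{H,O}`. -/
def Lstar (K : Matrix (Fin p ⊕ Fin h) (Fin p ⊕ Fin h) ℝ) : Matrix (Fin p) (Fin p) ℝ :=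
  K.toBlocks₁₂ * (K.toBlocks₂₂)⁻¹ * K.toBlocks₂₁

/-- `K̃*_O = S* − L*` (Schur complement). -/
def KtildeO (K : Matrix (Fin p ⊕ Fin h) (Fin p ⊕ Fin h) ℝ) : Matrix (Fin p) (Fin p) ℝ :=
  Sstar K - Lstar K

/-- `Σ*_O = (K̃*_O)⁻¹`. -/
def SigmaO (K : Matrix (Fin p ⊕ Fin h) (Fin p ⊕ Fin h) ℝ) : Matrix (Fin p) (Fin p) ℝ :=
  (KtildeO K)⁻¹

/-- `ψ = ‖Σ*_O‖₂`. -/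
def psi (K : Matrix (Fin p ⊕ Fin h) (Fin p ⊕ Fin h) ℝ) : ℝ :=
  specNorm (SigmaO K)

/-- Fisher information operator `ℐ*(M) = Σ*_O M Σ*_O`. -/
def Istar (K : Matrix (Fin p ⊕ Fin h) (Fin p ⊕ Fin h) ℝ) (M : Matrix (Fin p) (Fin p) ℝ) :
    Matrix (Fin p) (Fin p) ℝ :=
  SigmaO K * M * SigmaO K

/-- A nearby tangent space: `T' = T(M')` for a symmetric `M'` with the same rank as `Lst`
and `ρ(T',T(Lst)) ≤ ξ(T(Lst))/2`. -/
def Nearby (Lst M' : Matrix (Fin p) (Fin p) ℝ) : Prop :=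
  M'.IsHermitian ∧ M'.rank = Lst.rank ∧ rhoSym M' Lst ≤ xiT Lst / 2

/-- `α_Ω`. -/
def alphaOmega (K : Matrix (Fin p ⊕ Fin h) (Fin p ⊕ Fin h) ℝ) : ℝ :=
  ⨅ M : {M : Matrix (Fin p) (Fin p) ℝ // M ∈ OmegaSet (Sstar K) ∧ maxNorm M = 1},
    maxNorm (projOmega (Sstar K) (Istar K (projOmega (Sstar K) M.1)))

/-- `δ_Ω`. -/
def deltaOmega (K : Matrix (Fin p ⊕ Fin h) (Fin p ⊕ Fin h) ℝ) : ℝ :=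
  ⨆ M : {M : Matrix (Fin p) (Fin p) ℝ // M ∈ OmegaSet (Sstar K) ∧ maxNorm M = 1},
    maxNorm (projOmegaPerp (Sstar K) (Istar K (projOmega (Sstar K) M.1)))

/-- `β_Ω`. -/
def betaOmega (K : Matrix (Fin p ⊕ Fin h) (Fin p ⊕ Fin h) ℝ) : ℝ :=
  ⨆ M : {M : Matrix (Fin p) (Fin p) ℝ // M ∈ OmegaSet (Sstar K) ∧ specNorm M = 1},
    specNorm (Istar K M.1)

/-- `α_T`. -/
def alphaTC (K : Matrix (Fin p ⊕ Fin h) (Fin p ⊕ Fin h) ℝ) : ℝ :=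
  ⨅ x : {x : Matrix (Fin p) (Fin p) ℝ × Matrix (Fin p) (Fin p) ℝ //
      Nearby (Lstar K) x.1 ∧ x.2 ∈ TsetSym x.1 ∧ specNorm x.2 = 1},
    specNorm (projTsym x.1.1 (Istar K (projTsym x.1.1 x.1.2)))

/-- `δ_T`. -/
def deltaTC (K : Matrix (Fin p ⊕ Fin h) (Fin p ⊕ Fin h) ℝ) : ℝ :=
  ⨆ x : {x : Matrix (Fin p) (Fin p) ℝ × Matrix (Fin p) (Fin p) ℝ //
      Nearby (Lstar K) x.1 ∧ x.2 ∈ TsetSym x.1 ∧ specNorm x.2 = 1},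
    specNorm (projTsymPerp x.1.1 (Istar K (projTsym x.1.1 x.1.2)))

/-- `β_T`. -/
def betaTC (K : Matrix (Fin p ⊕ Fin h) (Fin p ⊕ Fin h) ℝ) : ℝ :=
  ⨆ x : {x : Matrix (Fin p) (Fin p) ℝ × Matrix (Fin p) (Fin p) ℝ //
      Nearby (Lstar K) x.1 ∧ x.2 ∈ TsetSym x.1 ∧ maxNorm x.2 = 1},
    maxNorm (Istar K x.1.2)

/-- `α = min(α_Ω, α_T)`. -/
def alphaC (K : Matrix (Fin p ⊕ Fin h) (Fin p ⊕ Fin h) ℝ) : ℝ :=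
  min (alphaOmega K) (alphaTC K)

/-- `δ = max(δ_Ω, δ_T)`. -/
def deltaC (K : Matrix (Fin p ⊕ Fin h) (Fin p ⊕ Fin h) ℝ) : ℝ :=
  max (deltaOmega K) (deltaTC K)

/-- `β = max(β_Ω, β_T)`. -/
def betaC (K : Matrix (Fin p ⊕ Fin h) (Fin p ⊕ Fin h) ℝ) : ℝ :=
  max (betaOmega K) (betaTC K)

/-! ### Probability: iid Gaussian samples and sample covariance -/

/-- The positive semidefinite square root of a positive semidefinite matrix, spelled out as in
the older Mathlib's `Matrix.PosSemidef.sqrt`. -/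
def psdSqrt {n : ℕ} {S : Matrix (Fin n) (Fin n) ℝ} (hS : S.PosSemidef) : Matrix (Fin n) (Fin n) ℝ :=
  hS.1.eigenvectorUnitary.1 * diagonal ((↑) ∘ Real.sqrt ∘ hS.1.eigenvalues) *
    (star hS.1.eigenvectorUnitary : Matrix (Fin n) (Fin n) ℝ)

/-- The joint law of `n` i.i.d. samples from `N(0, S)` on `ℝ^p`, realized by pushing forward
i.i.d. standard Gaussians through the positive-semidefinite square root of `S`. -/
def iidGaussian (n p : ℕ) (S : Matrix (Fin p) (Fin p) ℝ) : Measure (Fin n → Fin p → ℝ) :=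
  if hS : S.PosSemidef then
    (Measure.pi fun _ : Fin n => Measure.pi fun _ : Fin p =>
        ProbabilityTheory.gaussianReal 0 1).map
      (fun Z => fun i => (psdSqrt hS).mulVec (Z i))
  else 0

/-- Sample covariance matrix of samples `X 1, …, X n`. -/
def sampleCov {p n : ℕ} (X : Fin n → Fin p → ℝ) : Matrix (Fin p) (Fin p) ℝ :=
  (n : ℝ)⁻¹ • ∑ i, Matrix.vecMulVec (X i) (X i)

/-! ### Optimization programs -/

/-- Nuclear norm `‖M‖_*` (sum of singular values). -/
def nuclearNorm (M : Matrix (Fin p) (Fin p) ℝ) : ℝ :=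
  (psdSqrt (Matrix.posSemidef_conjTranspose_mul_self M)).trace

/-- Objective of the program (sdp1): `tr((S−L)Σ) − log det(S−L) + λ(γ‖S‖₁ + tr(L))`. -/
def objSDP1 (Sig : Matrix (Fin p) (Fin p) ℝ) (lam gam : ℝ)
    (S L : Matrix (Fin p) (Fin p) ℝ) : ℝ :=
  ((S - L) * Sig).trace - Real.log (S - L).det + lam * (gam * l1Norm S + L.trace)

/-- Feasibility for (sdp1): symmetric `S, L`, `S − L ≻ 0`, `L ⪰ 0`. -/
def FeasSDP1 (S L : Matrix (Fin p) (Fin p) ℝ) : Prop :=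
  S.IsHermitian ∧ L.IsHermitian ∧ (S - L).PosDef ∧ L.PosSemidef

/-- `(S,L)` is an optimum of the program (sdp1). -/
def IsOptSDP1 (Sig : Matrix (Fin p) (Fin p) ℝ) (lam gam : ℝ)
    (S L : Matrix (Fin p) (Fin p) ℝ) : Prop :=
  FeasSDP1 S L ∧ ∀ S' L', FeasSDP1 S' L' →
    objSDP1 Sig lam gam S L ≤ objSDP1 Sig lam gam S' L'

/-- Objective with the nuclear norm: `tr((S−L)Σ) − log det(S−L) + λ(γ‖S‖₁ + ‖L‖_*)`. -/
def objNuc (Sig : Matrix (Fin p) (Fin p) ℝ) (lam gam : ℝ)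
    (S L : Matrix (Fin p) (Fin p) ℝ) : ℝ :=
  ((S - L) * Sig).trace - Real.log (S - L).det + lam * (gam * l1Norm S + nuclearNorm L)

/-- Feasibility for the tangent-space constrained program: symmetric, `S ∈ Ω(Sst)`,
`L ∈ T(M')`, `S − L ≻ 0`. -/
def FeasTS (Sst M' : Matrix (Fin p) (Fin p) ℝ) (S L : Matrix (Fin p) (Fin p) ℝ) : Prop :=
  S.IsHermitian ∧ S ∈ OmegaSet Sst ∧ L ∈ TsetSym M' ∧ (S - L).PosDef

/-- Optimality for the tangent-space constrained program. -/
def IsOptTS (Sst M' Sig : Matrix (Fin p) (Fin p) ℝ) (lam gam : ℝ)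
    (S L : Matrix (Fin p) (Fin p) ℝ) : Prop :=
  FeasTS Sst M' S L ∧ ∀ S' L', FeasTS Sst M' S' L' →
    objNuc Sig lam gam S L ≤ objNuc Sig lam gam S' L'

/-- Feasibility for the unconstrained nuclear-norm program: symmetric, `S − L ≻ 0`. -/
def FeasSy (S L : Matrix (Fin p) (Fin p) ℝ) : Prop :=
  S.IsHermitian ∧ L.IsHermitian ∧ (S - L).PosDef

/-- Optimality for the unconstrained nuclear-norm program. -/
def IsOptSy (Sig : Matrix (Fin p) (Fin p) ℝ) (lam gam : ℝ)
    (S L : Matrix (Fin p) (Fin p) ℝ) : Prop :=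
  FeasSy S L ∧ ∀ S' L', FeasSy S' L' →
    objNuc Sig lam gam S L ≤ objNuc Sig lam gam S' L'

/-! ### Spectral projectors and inertia -/

/-- Orthogonal projection onto the direct sum of the eigenspaces of a symmetric matrix `A`
corresponding to eigenvalues of magnitude less than `η`. -/
def spectralProjLT (A : Matrix (Fin p) (Fin p) ℝ) (η : ℝ) : Matrix (Fin p) (Fin p) ℝ :=
  if hA : A.IsHermitian then
    ∑ i ∈ Finset.univ.filter (fun i => |hA.eigenvalues i| < η),
      Matrix.vecMulVec (fun j => hA.eigenvectorBasis i j) (fun j => hA.eigenvectorBasis i j)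
  else 0

/-- `t` is an eigenvalue of `A`. -/
def hasEigval (A : Matrix (Fin p) (Fin p) ℝ) (t : ℝ) : Prop :=
  ∃ v : Fin p → ℝ, v ≠ 0 ∧ A.mulVec v = t • v

/-- Inertia (numbers of positive, negative, and zero eigenvalues) of a symmetric matrix. -/
def inertia (M : Matrix (Fin p) (Fin p) ℝ) : ℕ × ℕ × ℕ :=
  if hM : M.IsHermitian then
    ((Finset.univ.filter fun i => 0 < hM.eigenvalues i).card,
     (Finset.univ.filter fun i => hM.eigenvalues i < 0).card,
     (Finset.univ.filter fun i => hM.eigenvalues i = 0).card)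
  else (0, 0, 0)

end LVGGM

open Module
open scoped RealInnerProductSpace InnerProduct

/-!
Write `P`, `P'` for the orthogonal projections onto the column spaces `U` of `M` and `U'` of
`M + Δ`, and `b = ‖Δ‖₂ / σ`. Since `𝒫_T(N) = N - (1 - P) N (1 - P)`, the difference of the two
tangent projections is `(P' - P) N (1 - P) + (1 - P') N (P' - P)`, so it suffices to show
`‖P' - P‖₂ ≤ b`. Every `y ∈ U` is `M z` with `z ⊥ ker M`, hence `‖z‖ ≤ ‖y‖ / σ`, and
`(M + Δ) z = y + Δ z ∈ U'`; so `y` lies within `b ‖y‖` of `U'`. As `U` and `U'` have the same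
dimension and `b < 1`, projecting `U` onto `U'` is onto, which makes this bound symmetric: every
`y ∈ U'` lies within `b ‖y‖` of `U`. Pythagoras combines the two one-sided bounds into
`‖P' - P‖₂ ≤ b`.
-/

namespace Submodule

variable {E : Type*} [NormedAddCommGroup E] [InnerProductSpace ℝ E] {K L : Submodule ℝ E} {b : ℝ}

section HasOrthogonalProjection

variable [K.HasOrthogonalProjection] [L.HasOrthogonalProjection]

theorem norm_one_sub_starProjection_le : ‖1 - K.starProjection‖ ≤ 1 :=
  K.starProjection_orthogonal' ▸ Kᗮ.starProjection_norm_le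

theorem norm_starProjection_le_of_mem_orthogonal (hb0 : 0 ≤ b)
    (h : ∀ x ∈ K, ‖Lᗮ.starProjection x‖ ≤ b * ‖x‖) {u : E} (hu : u ∈ Lᗮ) :
    ‖K.starProjection u‖ ≤ b * ‖u‖ := by
  -- `h` bounds `P_{Lᗮ} P_K`, and `P_K P_{Lᗮ}` is its adjoint.
  set v := K.starProjection u
  rcases (norm_nonneg v).eq_or_lt with hv0 | hv0
  · rw [← hv0]; positivity
  refine le_of_mul_le_mul_left ?_ hv0
  calc ‖v‖ * ‖v‖ = ⟪u, K.starProjection v⟫ := by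
        rw [← real_inner_self_eq_norm_mul_norm]; exact K.inner_starProjection_left_eq_right u v
    _ = ⟪Lᗮ.starProjection u, v⟫ := by
      rw [starProjection_eq_self_iff.mpr (K.starProjection_apply_mem u),
        starProjection_eq_self_iff.mpr hu]
    _ = ⟪u, Lᗮ.starProjection v⟫ := Lᗮ.inner_starProjection_left_eq_right u v
    _ ≤ ‖u‖ * ‖Lᗮ.starProjection v‖ := real_inner_le_norm _ _
    _ ≤ ‖u‖ * (b * ‖v‖) := by gcongr; exact h v (K.starProjection_apply_mem u)
    _ = ‖v‖ * (b * ‖u‖) := by ring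

theorem norm_starProjection_sub_starProjection_le (hb0 : 0 ≤ b)
    (hKL : ∀ x ∈ K, ‖Lᗮ.starProjection x‖ ≤ b * ‖x‖)
    (hLK : ∀ y ∈ L, ‖Kᗮ.starProjection y‖ ≤ b * ‖y‖) :
    ‖L.starProjection - K.starProjection‖ ≤ b := by
  refine ContinuousLinearMap.opNorm_le_bound _ hb0 fun w => ?_
  set y := L.starProjection w
  set u := Lᗮ.starProjection w
  have hsplit :
      (L.starProjection - K.starProjection) w = Kᗮ.starProjection y - K.starProjection u := by
    have hw : K.starProjection w = K.starProjection y + K.starProjection u := by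
      rw [← map_add]; exact congrArg _ (L.starProjection_add_starProjection_orthogonal w).symm
    rw [_root_.sub_apply, hw, starProjection_orthogonal_val]
    abel
  have horth : ⟪Kᗮ.starProjection y, K.starProjection u⟫ = 0 :=
    inner_left_of_mem_orthogonal (K.starProjection_apply_mem u) (Kᗮ.starProjection_apply_mem y)
  have hw : ‖w‖ ^ 2 = ‖y‖ ^ 2 + ‖u‖ ^ 2 := norm_sq_eq_add_norm_sq_starProjection w L
  have h1 : ‖Kᗮ.starProjection y‖ ≤ b * ‖y‖ := hLK y (L.starProjection_apply_mem w)
  have h2 : ‖K.starProjection u‖ ≤ b * ‖u‖ :=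
    norm_starProjection_le_of_mem_orthogonal hb0 hKL (Lᗮ.starProjection_apply_mem w)
  refine le_of_sq_le_sq ?_ (by positivity)
  calc ‖(L.starProjection - K.starProjection) w‖ ^ 2
      = ‖Kᗮ.starProjection y‖ ^ 2 + ‖K.starProjection u‖ ^ 2 := by
        rw [hsplit, norm_sub_sq_real, horth]; ring
    _ ≤ (b * ‖y‖) ^ 2 + (b * ‖u‖) ^ 2 := by gcongr
    _ = (b * ‖w‖) ^ 2 := by rw [mul_pow _ ‖w‖, hw]; ring

theorem norm_starProjection_orthogonal_starProjection_le (hb0 : 0 ≤ b) (hb1 : b < 1) {x : E}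
    (hxK : x ∈ K) (h : ‖Lᗮ.starProjection x‖ ≤ b * ‖x‖) :
    ‖Kᗮ.starProjection (L.starProjection x)‖ ≤ b * ‖L.starProjection x‖ := by
  set y := L.starProjection x
  have hx : ‖x‖ ^ 2 = ‖y‖ ^ 2 + ‖Lᗮ.starProjection x‖ ^ 2 :=
    norm_sq_eq_add_norm_sq_starProjection x L
  have hy : ‖y‖ ^ 2 = ‖K.starProjection y‖ ^ 2 + ‖Kᗮ.starProjection y‖ ^ 2 :=
    norm_sq_eq_add_norm_sq_starProjection y K
  have hxy : ‖y‖ ^ 2 ≤ ‖x‖ * ‖K.starProjection y‖ := calc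
    ‖y‖ ^ 2 = ⟪x, L.starProjection y⟫ := by
      rw [← real_inner_self_eq_norm_sq]; exact L.inner_starProjection_left_eq_right x y
    _ = ⟪K.starProjection x, y⟫ := by
      rw [starProjection_eq_self_iff.mpr (L.starProjection_apply_mem x),
        starProjection_eq_self_iff.mpr hxK]
    _ = ⟪x, K.starProjection y⟫ := K.inner_starProjection_left_eq_right x y
    _ ≤ ‖x‖ * ‖K.starProjection y‖ := real_inner_le_norm _ _
  have hcos : (1 - b ^ 2) * ‖x‖ ^ 2 ≤ ‖y‖ ^ 2 := by
    nlinarith [mul_self_le_mul_self (norm_nonneg _) h]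
  have hcos' : (1 - b ^ 2) * ‖y‖ ^ 2 ≤ ‖K.starProjection y‖ ^ 2 := by
    rcases (norm_nonneg y).eq_or_lt with hy0 | hy0
    · rw [← hy0]; nlinarith
    refine le_of_mul_le_mul_left ?_ (pow_pos hy0 2)
    calc ‖y‖ ^ 2 * ((1 - b ^ 2) * ‖y‖ ^ 2)
        = (1 - b ^ 2) * (‖y‖ ^ 2) ^ 2 := by ring
      _ ≤ (1 - b ^ 2) * (‖x‖ * ‖K.starProjection y‖) ^ 2 := by
        gcongr
        nlinarith
      _ = ((1 - b ^ 2) * ‖x‖ ^ 2) * ‖K.starProjection y‖ ^ 2 := by ring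
      _ ≤ ‖y‖ ^ 2 * ‖K.starProjection y‖ ^ 2 := by gcongr
  refine le_of_sq_le_sq ?_ (by positivity)
  nlinarith

end HasOrthogonalProjection

section FiniteDimensional

variable [FiniteDimensional ℝ K] [FiniteDimensional ℝ L]

theorem exists_mem_starProjection_eq_of_finrank_eq (hKL : finrank ℝ K = finrank ℝ L)
    (hinj : ∀ x ∈ K, L.starProjection x = 0 → x = 0) {y : E} (hy : y ∈ L) :
    ∃ x ∈ K, L.starProjection x = y := by
  let G : K →ₗ[ℝ] L := (L.orthogonalProjectionOnto ∘L K.subtypeL).toLinearMap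
  have hG : Function.Injective G := by
    rw [← LinearMap.ker_eq_bot, LinearMap.ker_eq_bot']
    exact fun x hx => Subtype.ext (hinj x x.2 (congrArg Subtype.val hx))
  obtain ⟨x, hx⟩ := (LinearMap.injective_iff_surjective_of_finrank_eq_finrank hKL).mp hG ⟨y, hy⟩
  exact ⟨x, x.2, congrArg Subtype.val hx⟩

theorem norm_starProjection_orthogonal_le_of_finrank_eq (hKL : finrank ℝ K = finrank ℝ L)
    (hb0 : 0 ≤ b) (hb1 : b < 1) (h : ∀ x ∈ K, ‖Lᗮ.starProjection x‖ ≤ b * ‖x‖) {y : E}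
    (hy : y ∈ L) : ‖Kᗮ.starProjection y‖ ≤ b * ‖y‖ := by
  obtain ⟨x, hxK, rfl⟩ : ∃ x ∈ K, L.starProjection x = y := by
    refine exists_mem_starProjection_eq_of_finrank_eq hKL (fun x hxK h0 => ?_) hy
    have hx : ‖x‖ ≤ b * ‖x‖ := by
      simpa [starProjection_orthogonal_val, h0] using h x hxK
    exact norm_le_zero_iff.mp (by nlinarith [norm_nonneg x])
  exact norm_starProjection_orthogonal_starProjection_le hb0 hb1 hxK (h x hxK)

end FiniteDimensional

end Submodule

namespace ContinuousLinearMap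

section LowerBound

variable {E ι : Type*} [NormedAddCommGroup E] [InnerProductSpace ℝ E] [CompleteSpace E]
  [Fintype ι]

theorem mul_norm_le_norm_apply_of_mem_orthogonal_ker (T : E →L[ℝ] E)
    (v : OrthonormalBasis ι ℝ E) {ev : ι → ℝ} (heig : ∀ i, (T†) (T (v i)) = ev i • v i)
    {σ : ℝ} (hσ : 0 ≤ σ) (hev : ∀ i, ev i = 0 ∨ σ ^ 2 ≤ ev i) {z : E} (hz : z ∈ T.kerᗮ) :
    σ * ‖z‖ ≤ ‖T z‖ := by
  have hinner : ∀ i x, ⟪T (v i), T x⟫ = ev i * ⟪v i, x⟫ := fun i x => by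
    rw [← adjoint_inner_left, heig, real_inner_smul_left]
  have hterm : ∀ i, σ ^ 2 * ⟪v i, z⟫ ^ 2 ≤ ev i * ⟪v i, z⟫ ^ 2 := by
    intro i
    rcases hev i with h | h
    · have hker : v i ∈ T.ker := by
        rw [LinearMap.mem_ker, coe_coe, ← norm_eq_zero, ← pow_eq_zero_iff two_ne_zero,
          ← real_inner_self_eq_norm_sq, hinner, h, zero_mul]
      rw [Submodule.inner_right_of_mem_orthogonal hker hz]
      simp
    · gcongr
  have hsq : (σ * ‖z‖) ^ 2 ≤ ‖T z‖ ^ 2 := calc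
    (σ * ‖z‖) ^ 2 = ∑ i, σ ^ 2 * ⟪v i, z⟫ ^ 2 := by
      rw [mul_pow, ← v.sum_sq_inner_right z, Finset.mul_sum]
    _ ≤ ∑ i, ev i * ⟪v i, z⟫ ^ 2 := Finset.sum_le_sum fun i _ => hterm i
    _ = ⟪T (∑ i, ⟪v i, z⟫ • v i), T z⟫ := by
      simp only [map_sum, map_smul, sum_inner, real_inner_smul_left, hinner]
      exact Finset.sum_congr rfl fun i _ => by ring
    _ = ‖T z‖ ^ 2 := by rw [v.sum_repr', real_inner_self_eq_norm_sq]
  exact (pow_le_pow_iff_left₀ (by positivity) (norm_nonneg _) two_ne_zero).mp hsq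

end LowerBound

variable {E : Type*} [NormedAddCommGroup E] [InnerProductSpace ℝ E] [FiniteDimensional ℝ E]
  {A D : E →L[ℝ] E} {σ : ℝ}

theorem norm_starProjection_orthogonal_range_add_le (hσ : 0 < σ)
    (hA : ∀ z ∈ A.kerᗮ, σ * ‖z‖ ≤ ‖A z‖) {y : E} (hy : y ∈ A.range) :
    ‖(A + D).rangeᗮ.starProjection y‖ ≤ ‖D‖ / σ * ‖y‖ := by
  obtain ⟨w, rfl⟩ := hy
  rw [coe_coe]
  have hAz : A (A.kerᗮ.starProjection w) = A w := by
    have h0 : A (A.ker.starProjection w) = 0 := A.ker.starProjection_apply_mem w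
    rw [Submodule.starProjection_orthogonal_val, map_sub, h0, sub_zero]
  set z := A.kerᗮ.starProjection w
  have hz : σ * ‖z‖ ≤ ‖A w‖ := hAz ▸ hA z (A.kerᗮ.starProjection_apply_mem w)
  set Q := (A + D).rangeᗮ.starProjection
  have hQ : Q (A w) = -Q (D z) := by
    have h0 : Q ((A + D) z) = 0 :=
      Submodule.starProjection_orthogonal_apply_eq_zero (LinearMap.mem_range_self _ z)
    rw [_root_.add_apply, map_add, hAz] at h0
    exact eq_neg_of_add_eq_zero_left h0
  rw [hQ, norm_neg, div_mul_eq_mul_div, le_div_iff₀ hσ]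
  calc ‖Q (D z)‖ * σ ≤ ‖D‖ * ‖z‖ * σ := by
        gcongr
        exact (Submodule.norm_starProjection_apply_le _ _).trans (D.le_opNorm z)
    _ = ‖D‖ * (σ * ‖z‖) := by ring
    _ ≤ ‖D‖ * ‖A w‖ := by gcongr

theorem norm_starProjection_range_add_sub_le (hσ : 0 < σ)
    (hA : ∀ z ∈ A.kerᗮ, σ * ‖z‖ ≤ ‖A z‖)
    (hrank : finrank ℝ (A + D).range = finrank ℝ A.range)
    (hD : ‖D‖ < σ) :
    ‖(A + D).range.starProjection - A.range.starProjection‖ ≤ ‖D‖ / σ := by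
  have hb0 : 0 ≤ ‖D‖ / σ := by positivity
  have hb1 : ‖D‖ / σ < 1 := (div_lt_one hσ).mpr hD
  have hAD := fun y (hy : y ∈ A.range) =>
    norm_starProjection_orthogonal_range_add_le (D := D) hσ hA hy
  exact Submodule.norm_starProjection_sub_starProjection_le hb0 hAD
    fun y hy => Submodule.norm_starProjection_orthogonal_le_of_finrank_eq hrank.symm hb0 hb1 hAD hy

end ContinuousLinearMap

section TangentProj

variable {R : Type*}

def tangentProj [NonUnitalRing R] (P N : R) : R :=
  P * N + N * P - P * N * P

theorem map_tangentProj {S F : Type*} [NonUnitalRing R] [NonUnitalRing S] [FunLike F R S]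
    [NonUnitalRingHomClass F R S] (f : F) (P N : R) :
    f (tangentProj P N) = tangentProj (f P) (f N) := by
  simp only [tangentProj, map_sub, map_add, map_mul]

theorem norm_tangentProj_sub_le [NormedRing R] {P Q N : R} (hP : ‖1 - P‖ ≤ 1)
    (hQ : ‖1 - Q‖ ≤ 1) :
    ‖tangentProj Q N - tangentProj P N‖ ≤ 2 * ‖Q - P‖ * ‖N‖ := by
  have hsplit : tangentProj Q N - tangentProj P N =
      (Q - P) * N * (1 - P) + (1 - Q) * N * (Q - P) := by
    simp only [tangentProj]; noncomm_ring
  calc ‖tangentProj Q N - tangentProj P N‖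
      ≤ ‖Q - P‖ * ‖N‖ * ‖1 - P‖ + ‖1 - Q‖ * ‖N‖ * ‖Q - P‖ := by
        rw [hsplit]
        exact (norm_add_le _ _).trans (add_le_add norm_mul₃_le norm_mul₃_le)
    _ ≤ ‖Q - P‖ * ‖N‖ * 1 + 1 * ‖N‖ * ‖Q - P‖ := by gcongr
    _ = 2 * ‖Q - P‖ * ‖N‖ := by ring

end TangentProj

namespace LVGGM

variable {p : ℕ}

theorem toEuclideanCLM_colProj (A : Matrix (Fin p) (Fin p) ℝ) :
    toEuclideanCLM (𝕜 := ℝ) (colProj A) = (toEuclideanCLM (𝕜 := ℝ) A).range.starProjection := by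
  apply ContinuousLinearMap.coe_injective
  rw [coe_toEuclideanCLM_eq_toEuclideanLin, toEuclideanLin_eq_toLin_orthonormal, colProj,
    toLin_toMatrix]
  rfl

theorem finrank_range_toEuclideanCLM (A : Matrix (Fin p) (Fin p) ℝ) :
    finrank ℝ (toEuclideanCLM (𝕜 := ℝ) A).range = A.rank := by
  rw [rank_eq_finrank_range_toLin A (EuclideanSpace.basisFun (Fin p) ℝ).toBasis
      (EuclideanSpace.basisFun (Fin p) ℝ).toBasis, ← toEuclideanLin_eq_toLin_orthonormal]
  rfl

theorem projTsym_eq_tangentProj (M N : Matrix (Fin p) (Fin p) ℝ) :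
    projTsym M N = tangentProj (colProj M) N :=
  rfl

theorem mul_norm_le_norm_toEuclideanCLM_of_mem_orthogonal_ker {M : Matrix (Fin p) (Fin p) ℝ}
    {σ : ℝ} (hσ : 0 ≤ σ) (hσmin : ∀ i, singVals M i = 0 ∨ σ ≤ singVals M i)
    {z : EuclideanSpace ℝ (Fin p)} (hz : z ∈ (toEuclideanCLM (𝕜 := ℝ) M).kerᗮ) :
    σ * ‖z‖ ≤ ‖toEuclideanCLM (𝕜 := ℝ) M z‖ := by
  have hB := posSemidef_conjTranspose_mul_self M
  refine (toEuclideanCLM (𝕜 := ℝ) M).mul_norm_le_norm_apply_of_mem_orthogonal_ker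
    hB.1.eigenvectorBasis (ev := hB.1.eigenvalues) (fun i => ?_) hσ (fun i => ?_) hz
  · rw [← ContinuousLinearMap.star_eq_adjoint, ← map_star, ← mul_apply_eq_comp,
      ← map_mul, star_eq_conjTranspose]
    apply WithLp.ofLp_injective
    simpa using hB.1.mulVec_eigenvectorBasis i
  · rcases hσmin i with h | h
    · exact .inl ((Real.sqrt_eq_zero (hB.eigenvalues_nonneg i)).mp h)
    · exact .inr ((Real.le_sqrt hσ (hB.eigenvalues_nonneg i)).mp h)

end LVGGM

theorem statement_0_general {p : ℕ} (r : ℕ) (σ : ℝ) (M Δ : Matrix (Fin p) (Fin p) ℝ)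
    (hrM : M.rank = r) (hrMΔ : (M + Δ).rank = r)
    (hσpos : 0 < σ)
    (hσmin : ∀ i, LVGGM.singVals M i = 0 ∨ σ ≤ LVGGM.singVals M i)
    (hΔsmall : LVGGM.specNorm Δ ≤ σ / 8) :
    LVGGM.rhoSym (M + Δ) M ≤ (2 / σ) * LVGGM.specNorm Δ := by
  set A := toEuclideanCLM (𝕜 := ℝ) M
  set D := toEuclideanCLM (𝕜 := ℝ) Δ
  have hrank : finrank ℝ (A + D).range = finrank ℝ A.range := by
    rw [← map_add, LVGGM.finrank_range_toEuclideanCLM, LVGGM.finrank_range_toEuclideanCLM, hrM,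
      hrMΔ]
  have hproj := ContinuousLinearMap.norm_starProjection_range_add_sub_le hσpos
    (fun z hz => LVGGM.mul_norm_le_norm_toEuclideanCLM_of_mem_orthogonal_ker hσpos.le hσmin hz)
    hrank (by rw [LVGGM.specNorm] at hΔsmall; linarith)
  refine Real.iSup_le (fun ⟨N, hN⟩ => ?_) (by rw [LVGGM.specNorm]; positivity)
  calc LVGGM.specNorm (LVGGM.projTsym (M + Δ) N - LVGGM.projTsym M N)
      = ‖tangentProj (A + D).range.starProjection (toEuclideanCLM (𝕜 := ℝ) N) -
          tangentProj A.range.starProjection (toEuclideanCLM (𝕜 := ℝ) N)‖ := by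
        rw [LVGGM.specNorm, LVGGM.projTsym_eq_tangentProj, LVGGM.projTsym_eq_tangentProj, map_sub,
          map_tangentProj, map_tangentProj, LVGGM.toEuclideanCLM_colProj,
          LVGGM.toEuclideanCLM_colProj, map_add]
    _ ≤ 2 * ‖(A + D).range.starProjection - A.range.starProjection‖ *
          ‖toEuclideanCLM (𝕜 := ℝ) N‖ :=
        norm_tangentProj_sub_le Submodule.norm_one_sub_starProjection_le
          Submodule.norm_one_sub_starProjection_le
    _ ≤ 2 * (‖D‖ / σ) * 1 := by gcongr; exact hN
    _ = 2 / σ * LVGGM.specNorm Δ := by rw [LVGGM.specNorm]; ring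

/-- Proposition: twisting of tangent spaces under perturbation.
If `M` is symmetric of rank `r` with smallest nonzero singular value `σ`, `Δ` is symmetric with
`‖Δ‖₂ ≤ σ/8`, and `M+Δ` also has rank `r`, then `ρ(T(M+Δ), T(M)) ≤ (2/σ)‖Δ‖₂`. -/
theorem statement_0 {p : ℕ} (r : ℕ) (σ : ℝ) (M Δ : Matrix (Fin p) (Fin p) ℝ)
    (hM : M.IsHermitian) (hΔ : Δ.IsHermitian)
    (hrM : M.rank = r) (hrMΔ : (M + Δ).rank = r)
    (hσpos : 0 < σ)
    (hσmin : ∀ i, LVGGM.singVals M i = 0 ∨ σ ≤ LVGGM.singVals M i)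
    (hσex : ∃ i, LVGGM.singVals M i = σ)
    (hΔsmall : LVGGM.specNorm Δ ≤ σ / 8) :
    LVGGM.rhoSym (M + Δ) M ≤ (2 / σ) * LVGGM.specNorm Δ :=
  statement_0_general r σ M Δ hrM hrMΔ hσpos hσmin hΔsmall
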